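/- Under the stated assumptions, the curvature satisfies the evolution equation ∂_t κ = ∂_s² v_N + κ² v_N + v_T ∂_s κ − ∂_s(τ v_B) − τ ∂_s v_B − τ² v_N. -/

import Mathlib

noncomputable section

open Real

open scoped RealInnerProductSpace

/-- The cross product on `EuclideanSpace ℝ (Fin 3)`. -/
def cross3 (a b : EuclideanSpace ℝ (Fin 3)) : EuclideanSpace ℝ (Fin 3) :=
  (WithLp.equiv 2 (Fin 3 → ℝ)).symm
    ![a 1 * b 2 - a 2 * b 1, a 2 * b 0 - a 0 * b 2, a 0 * b 1 - a 1 * b 0]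

/-- Partial derivative with respect to the first (spatial) variable `u`. -/
def pu {α : Type*} [NormedAddCommGroup α] [NormedSpace ℝ α]
    (f : ℝ × ℝ → α) (p : ℝ × ℝ) : α :=
  deriv (fun u => f (u, p.2)) p.1

/-- Partial derivative with respect to the second (time) variable `t`. -/
def pt {α : Type*} [NormedAddCommGroup α] [NormedSpace ℝ α]
    (f : ℝ × ℝ → α) (p : ℝ × ℝ) : α :=
  deriv (fun t => f (p.1, t)) p.2

/-- Arc-length derivative `∂_s = g⁻¹ ∂_u` along the curves parametrized by `X`. -/
def Ds (X : ℝ × ℝ → EuclideanSpace ℝ (Fin 3)) {α : Type*}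
    [NormedAddCommGroup α] [NormedSpace ℝ α] (f : ℝ × ℝ → α) (p : ℝ × ℝ) : α :=
  ‖pu X p‖⁻¹ • pu f p

section Calc
variable {E : Type*} [NormedAddCommGroup E] [NormedSpace ℝ E]

theorem hasDerivAt_lineU (p : ℝ × ℝ) : HasDerivAt (fun u : ℝ => (u, p.2)) ((1:ℝ), (0:ℝ)) p.1 :=
  (hasDerivAt_id p.1).prodMk (hasDerivAt_const p.1 p.2)

theorem hasDerivAt_lineT (p : ℝ × ℝ) : HasDerivAt (fun t : ℝ => (p.1, t)) ((0:ℝ), (1:ℝ)) p.2 :=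
  (hasDerivAt_const p.2 p.1).prodMk (hasDerivAt_id p.2)

theorem sliceU_hasDerivAt {f : ℝ × ℝ → E} (hf : ContDiff ℝ (⊤ : ℕ∞) f) (p : ℝ × ℝ) :
    HasDerivAt (fun u => f (u, p.2)) (fderiv ℝ f p (1, 0)) p.1 := by
  have h1 : HasFDerivAt f (fderiv ℝ f p) ((fun u : ℝ => (u, p.2)) p.1) := by
    simpa using (hf.differentiable (by simp) p).hasFDerivAt
  exact h1.comp_hasDerivAt p.1 (hasDerivAt_lineU p)

theorem sliceT_hasDerivAt {f : ℝ × ℝ → E} (hf : ContDiff ℝ (⊤ : ℕ∞) f) (p : ℝ × ℝ) :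
    HasDerivAt (fun t => f (p.1, t)) (fderiv ℝ f p (0, 1)) p.2 := by
  have h1 : HasFDerivAt f (fderiv ℝ f p) ((fun t : ℝ => (p.1, t)) p.2) := by
    simpa using (hf.differentiable (by simp) p).hasFDerivAt
  exact h1.comp_hasDerivAt p.2 (hasDerivAt_lineT p)

theorem pu_eq_fderiv {f : ℝ × ℝ → E} (hf : ContDiff ℝ (⊤ : ℕ∞) f) (p : ℝ × ℝ) :
    pu f p = fderiv ℝ f p (1, 0) := (sliceU_hasDerivAt hf p).deriv

theorem pt_eq_fderiv {f : ℝ × ℝ → E} (hf : ContDiff ℝ (⊤ : ℕ∞) f) (p : ℝ × ℝ) :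
    pt f p = fderiv ℝ f p (0, 1) := (sliceT_hasDerivAt hf p).deriv

theorem pu_hasDerivAt {f : ℝ × ℝ → E} (hf : ContDiff ℝ (⊤ : ℕ∞) f) (p : ℝ × ℝ) :
    HasDerivAt (fun u => f (u, p.2)) (pu f p) p.1 := by
  rw [pu_eq_fderiv hf]; exact sliceU_hasDerivAt hf p

theorem pt_hasDerivAt {f : ℝ × ℝ → E} (hf : ContDiff ℝ (⊤ : ℕ∞) f) (p : ℝ × ℝ) :
    HasDerivAt (fun t => f (p.1, t)) (pt f p) p.2 := by
  rw [pt_eq_fderiv hf]; exact sliceT_hasDerivAt hf p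

theorem pu_contDiff {f : ℝ × ℝ → E} (hf : ContDiff ℝ (⊤ : ℕ∞) f) : ContDiff ℝ (⊤ : ℕ∞) (pu f) := by
  have : pu f = fun p => fderiv ℝ f p (1, 0) := funext fun p => pu_eq_fderiv hf p
  rw [this]
  exact (hf.fderiv_right (by simp)).clm_apply contDiff_const

theorem pt_contDiff {f : ℝ × ℝ → E} (hf : ContDiff ℝ (⊤ : ℕ∞) f) : ContDiff ℝ (⊤ : ℕ∞) (pt f) := by
  have : pt f = fun p => fderiv ℝ f p (0, 1) := funext fun p => pt_eq_fderiv hf p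
  rw [this]
  exact (hf.fderiv_right (by simp)).clm_apply contDiff_const

theorem pt_pu_comm {f : ℝ × ℝ → E} (hf : ContDiff ℝ (⊤ : ℕ∞) f) (p : ℝ × ℝ) :
    pt (pu f) p = pu (pt f) p := by
  have hf' : ContDiff ℝ (⊤ : ℕ∞) (fderiv ℝ f) := hf.fderiv_right (by simp)
  have hsymm := second_derivative_symmetric
    (f := f) (f' := fderiv ℝ f) (f'' := fderiv ℝ (fderiv ℝ f) p) (x := p)
    (fun y => (hf.differentiable (by simp) y).hasFDerivAt)
    (hf'.differentiable (by simp) p).hasFDerivAt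
  have h1 : pt (pu f) p = fderiv ℝ (fderiv ℝ f) p (0, 1) (1, 0) := by
    have hfun : pu f = fun q => fderiv ℝ f q (1, 0) := funext fun q => pu_eq_fderiv hf q
    rw [hfun]
    have := ((sliceT_hasDerivAt hf' p).clm_apply
      (hasDerivAt_const p.2 ((1:ℝ), (0:ℝ)))).deriv
    simpa [pt] using this
  have h2 : pu (pt f) p = fderiv ℝ (fderiv ℝ f) p (1, 0) (0, 1) := by
    have hfun : pt f = fun q => fderiv ℝ f q (0, 1) := funext fun q => pt_eq_fderiv hf q
    rw [hfun]
    have := ((sliceU_hasDerivAt hf' p).clm_apply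
      (hasDerivAt_const p.1 ((0:ℝ), (1:ℝ)))).deriv
    simpa [pu] using this
  rw [h1, h2, hsymm]

end Calc

section Rules
variable {E : Type*} [NormedAddCommGroup E] [InnerProductSpace ℝ E]
variable {F : Type*} [NormedAddCommGroup F] [NormedSpace ℝ F]

theorem pu_mul {a b : ℝ × ℝ → ℝ} (ha : ContDiff ℝ (⊤ : ℕ∞) a) (hb : ContDiff ℝ (⊤ : ℕ∞) b) (p : ℝ × ℝ) :
    pu (fun q => a q * b q) p = pu a p * b p + a p * pu b p := by
  exact Eq.trans (by exact ((pu_hasDerivAt ha p).mul (pu_hasDerivAt hb p)).deriv) (by ring)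

theorem pt_mul {a b : ℝ × ℝ → ℝ} (ha : ContDiff ℝ (⊤ : ℕ∞) a) (hb : ContDiff ℝ (⊤ : ℕ∞) b) (p : ℝ × ℝ) :
    pt (fun q => a q * b q) p = pt a p * b p + a p * pt b p := by
  exact Eq.trans (by exact ((pt_hasDerivAt ha p).mul (pt_hasDerivAt hb p)).deriv) (by ring)

theorem pu_smul {a : ℝ × ℝ → ℝ} {G : ℝ × ℝ → F} (ha : ContDiff ℝ (⊤ : ℕ∞) a)
    (hG : ContDiff ℝ (⊤ : ℕ∞) G) (p : ℝ × ℝ) :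
    pu (fun q => a q • G q) p = pu a p • G p + a p • pu G p := by
  exact Eq.trans (by exact ((pu_hasDerivAt ha p).smul (pu_hasDerivAt hG p)).deriv) (add_comm _ _)

theorem pt_smul {a : ℝ × ℝ → ℝ} {G : ℝ × ℝ → F} (ha : ContDiff ℝ (⊤ : ℕ∞) a)
    (hG : ContDiff ℝ (⊤ : ℕ∞) G) (p : ℝ × ℝ) :
    pt (fun q => a q • G q) p = pt a p • G p + a p • pt G p := by
  exact Eq.trans (by exact ((pt_hasDerivAt ha p).smul (pt_hasDerivAt hG p)).deriv) (add_comm _ _)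

theorem pu_inner {G H : ℝ × ℝ → E} (hG : ContDiff ℝ (⊤ : ℕ∞) G) (hH : ContDiff ℝ (⊤ : ℕ∞) H) (p : ℝ × ℝ) :
    pu (fun q => (⟪G q, H q⟫ : ℝ)) p = ⟪pu G p, H p⟫ + ⟪G p, pu H p⟫ := by
  exact Eq.trans (by exact (HasDerivAt.inner ℝ (pu_hasDerivAt hG p) (pu_hasDerivAt hH p)).deriv) (by ring)

theorem pt_inner {G H : ℝ × ℝ → E} (hG : ContDiff ℝ (⊤ : ℕ∞) G) (hH : ContDiff ℝ (⊤ : ℕ∞) H) (p : ℝ × ℝ) :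
    pt (fun q => (⟪G q, H q⟫ : ℝ)) p = ⟪pt G p, H p⟫ + ⟪G p, pt H p⟫ := by
  exact Eq.trans (by exact (HasDerivAt.inner ℝ (pt_hasDerivAt hG p) (pt_hasDerivAt hH p)).deriv) (by ring)

theorem pu_inv {a : ℝ × ℝ → ℝ} (ha : ContDiff ℝ (⊤ : ℕ∞) a) (h0 : ∀ q, a q ≠ 0) (p : ℝ × ℝ) :
    pu (fun q => (a q)⁻¹) p = -pu a p / a p ^ 2 :=
  ((pu_hasDerivAt ha p).inv (h0 p)).deriv

theorem pt_inv {a : ℝ × ℝ → ℝ} (ha : ContDiff ℝ (⊤ : ℕ∞) a) (h0 : ∀ q, a q ≠ 0) (p : ℝ × ℝ) :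
    pt (fun q => (a q)⁻¹) p = -pt a p / a p ^ 2 :=
  ((pt_hasDerivAt ha p).inv (h0 p)).deriv

theorem pu_add2 {G H : ℝ × ℝ → F} (hG : ContDiff ℝ (⊤ : ℕ∞) G) (hH : ContDiff ℝ (⊤ : ℕ∞) H) (p : ℝ × ℝ) :
    pu (fun q => G q + H q) p = pu G p + pu H p :=
  ((pu_hasDerivAt hG p).add (pu_hasDerivAt hH p)).deriv

theorem pu_add3 {G H K : ℝ × ℝ → F} (hG : ContDiff ℝ (⊤ : ℕ∞) G) (hH : ContDiff ℝ (⊤ : ℕ∞) H)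
    (hK : ContDiff ℝ (⊤ : ℕ∞) K) (p : ℝ × ℝ) :
    pu (fun q => G q + H q + K q) p = pu G p + pu H p + pu K p :=
  (((pu_hasDerivAt hG p).add (pu_hasDerivAt hH p)).add (pu_hasDerivAt hK p)).deriv

theorem pu_subadd {a b c : ℝ × ℝ → ℝ} (ha : ContDiff ℝ (⊤ : ℕ∞) a) (hb : ContDiff ℝ (⊤ : ℕ∞) b)
    (hc : ContDiff ℝ (⊤ : ℕ∞) c) (p : ℝ × ℝ) :
    pu (fun q => a q - b q + c q) p = pu a p - pu b p + pu c p :=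
  (((pu_hasDerivAt ha p).sub (pu_hasDerivAt hb p)).add (pu_hasDerivAt hc p)).deriv

theorem pu_inner_const {G H : ℝ × ℝ → E} (hG : ContDiff ℝ (⊤ : ℕ∞) G) (hH : ContDiff ℝ (⊤ : ℕ∞) H)
    {c : ℝ} (hc : ∀ q, (⟪G q, H q⟫ : ℝ) = c) (p : ℝ × ℝ) :
    (⟪pu G p, H p⟫ : ℝ) + ⟪G p, pu H p⟫ = 0 := by
  have h1 := pu_inner hG hH p
  have h2 : (fun q => (⟪G q, H q⟫ : ℝ)) = fun _ => c := funext hc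
  rw [h2] at h1
  have h3 : pu (fun _ : ℝ × ℝ => c) p = 0 := by simp [pu]
  rw [h3] at h1
  linarith

end Rules

section Cross

theorem inner3 (a b : EuclideanSpace ℝ (Fin 3)) :
    ⟪a, b⟫ = a 0 * b 0 + a 1 * b 1 + a 2 * b 2 := by
  simp [PiLp.inner_apply, Fin.sum_univ_three]; ring

theorem inner_cross3_left (a b : EuclideanSpace ℝ (Fin 3)) : ⟪cross3 a b, a⟫ = 0 := by
  simp only [inner3, cross3, WithLp.equiv_symm_apply, PiLp.toLp_apply]
  simp; ring

theorem inner_cross3_right (a b : EuclideanSpace ℝ (Fin 3)) : ⟪cross3 a b, b⟫ = 0 := by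
  simp only [inner3, cross3, WithLp.equiv_symm_apply, PiLp.toLp_apply]
  simp; ring

theorem inner_cross3_self (a b : EuclideanSpace ℝ (Fin 3)) :
    ⟪cross3 a b, cross3 a b⟫ = ⟪a, a⟫ * ⟪b, b⟫ - ⟪a, b⟫ ^ 2 := by
  simp only [inner3, cross3, WithLp.equiv_symm_apply, PiLp.toLp_apply]
  simp; ring

theorem contDiff_cross3 {f g : ℝ × ℝ → EuclideanSpace ℝ (Fin 3)}
    (hf : ContDiff ℝ (⊤ : ℕ∞) f) (hg : ContDiff ℝ (⊤ : ℕ∞) g) :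
    ContDiff ℝ (⊤ : ℕ∞) (fun p => cross3 (f p) (g p)) := by
  have hc : ∀ (F : ℝ × ℝ → EuclideanSpace ℝ (Fin 3)), ContDiff ℝ (⊤ : ℕ∞) F →
      ∀ i, ContDiff ℝ (⊤ : ℕ∞) (fun p => F p i) := fun F hF i =>
    (EuclideanSpace.proj (𝕜 := ℝ) i).contDiff.comp hF
  rw [contDiff_euclidean]
  intro i
  fin_cases i <;>
    · simp only [cross3, WithLp.equiv_symm_apply, PiLp.toLp_apply, Matrix.cons_val_zero, Matrix.cons_val_one,
        Matrix.head_cons, Matrix.cons_val_two, Matrix.tail_cons]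
      exact ((hc f hf _).mul (hc g hg _)).sub ((hc f hf _).mul (hc g hg _))

theorem expansion {T N : EuclideanSpace ℝ (Fin 3)} (hT : ⟪T, T⟫ = 1) (hN : ⟪N, N⟫ = 1)
    (hTN : ⟪T, N⟫ = 0) (v : EuclideanSpace ℝ (Fin 3)) :
    v = ⟪T, v⟫ • T + ⟪N, v⟫ • N + ⟪cross3 T N, v⟫ • cross3 T N := by
  set B := cross3 T N with hB
  have hon : Orthonormal ℝ (![T, N, B] : Fin 3 → EuclideanSpace ℝ (Fin 3)) := by
    rw [orthonormal_iff_ite]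
    intro i j
    have h1 : ⟪B, T⟫ = 0 := inner_cross3_left T N
    have h2 : ⟪B, N⟫ = 0 := inner_cross3_right T N
    have h3 : ⟪B, B⟫ = 1 := by rw [hB, inner_cross3_self, hT, hN, hTN]; ring
    have h4 : ⟪N, T⟫ = 0 := by rw [real_inner_comm]; exact hTN
    have h5 : ⟪T, B⟫ = 0 := by rw [real_inner_comm]; exact h1
    have h6 : ⟪N, B⟫ = 0 := by rw [real_inner_comm]; exact h2
    fin_cases i <;> fin_cases j <;> simp_all
  have hcard : Fintype.card (Fin 3) = Module.finrank ℝ (EuclideanSpace ℝ (Fin 3)) := by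
    simp [finrank_euclideanSpace]
  have hcoe : ⇑(basisOfOrthonormalOfCardEqFinrank hon hcard) = ![T, N, B] :=
    coe_basisOfOrthonormalOfCardEqFinrank hon hcard
  have honb : Orthonormal ℝ ⇑(basisOfOrthonormalOfCardEqFinrank hon hcard) := by
    rw [hcoe]; exact hon
  have hrep := ((basisOfOrthonormalOfCardEqFinrank hon hcard).toOrthonormalBasis honb).sum_repr' v
  have hcoe2 : ⇑((basisOfOrthonormalOfCardEqFinrank hon hcard).toOrthonormalBasis honb)
      = ![T, N, B] := by
    rw [Module.Basis.coe_toOrthonormalBasis, hcoe]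
  rw [hcoe2, Fin.sum_univ_three] at hrep
  simp only [Matrix.cons_val_zero, Matrix.cons_val_one, Matrix.head_cons,
    Matrix.cons_val_two, Matrix.tail_cons] at hrep
  exact hrep.symm

end Cross

set_option maxHeartbeats 3200000 in
theorem curvature_evolution
    (X : ℝ × ℝ → EuclideanSpace ℝ (Fin 3)) (vN vB vT : ℝ × ℝ → ℝ)
    (g κ τ : ℝ × ℝ → ℝ) (T N B : ℝ × ℝ → EuclideanSpace ℝ (Fin 3))
    (hX : ContDiff ℝ (⊤ : ℕ∞) X) (hXper : ∀ u t : ℝ, X (u + 1, t) = X (u, t))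
    (hvN : ContDiff ℝ (⊤ : ℕ∞) vN) (hvNper : ∀ u t : ℝ, vN (u + 1, t) = vN (u, t))
    (hvB : ContDiff ℝ (⊤ : ℕ∞) vB) (hvBper : ∀ u t : ℝ, vB (u + 1, t) = vB (u, t))
    (hvT : ContDiff ℝ (⊤ : ℕ∞) vT) (hvTper : ∀ u t : ℝ, vT (u + 1, t) = vT (u, t))
    (hg : ∀ p : ℝ × ℝ, g p = ‖pu X p‖) (hgpos : ∀ p : ℝ × ℝ, 0 < g p)
    (hT : ∀ p : ℝ × ℝ, T p = Ds X X p)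
    (hκ : ∀ p : ℝ × ℝ, κ p = ‖Ds X T p‖) (hκpos : ∀ p : ℝ × ℝ, 0 < κ p)
    (hN : ∀ p : ℝ × ℝ, N p = (κ p)⁻¹ • Ds X T p)
    (hB : ∀ p : ℝ × ℝ, B p = cross3 (T p) (N p))
    (hτ : ∀ p : ℝ × ℝ, τ p = -(inner ℝ (Ds X B p) (N p) : ℝ))
    (hflow : ∀ p : ℝ × ℝ, pt X p = vN p • N p + vB p • B p + vT p • T p) :
    ∀ p : ℝ × ℝ,
      pt κ p = Ds X (Ds X vN) p + (κ p) ^ 2 * vN p + vT p * Ds X κ p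
        - Ds X (fun q => τ q * vB q) p - τ p * Ds X vB p - (τ p) ^ 2 * vN p := by
  -- basic nonvanishing
  have hgne : ∀ p, g p ≠ 0 := fun p => ne_of_gt (hgpos p)
  have hκne : ∀ p, κ p ≠ 0 := fun p => ne_of_gt (hκpos p)
  have hXune : ∀ p, pu X p ≠ 0 := fun p => by
    have := hgpos p; rw [hg p] at this; exact norm_pos_iff.mp this
  -- explicit formulas
  have hgf : g = fun p => ‖pu X p‖ := funext hg
  have hgsm : ContDiff ℝ (⊤ : ℕ∞) g := by
    rw [hgf]; exact (pu_contDiff hX).norm ℝ hXune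
  have hginv : ContDiff ℝ (⊤ : ℕ∞) (fun p => (g p)⁻¹) := hgsm.inv hgne
  have hTp : ∀ p, T p = (g p)⁻¹ • pu X p := fun p => by
    rw [hT p, Ds, ← hg p]
  have hTf : T = fun p => (g p)⁻¹ • pu X p := funext hTp
  have hTsm : ContDiff ℝ (⊤ : ℕ∞) T := by rw [hTf]; exact hginv.smul (pu_contDiff hX)
  have hDsT : ∀ p, Ds X T p = (g p)⁻¹ • pu T p := fun p => by rw [Ds, ← hg p]
  have hκp : ∀ p, κ p = ‖(g p)⁻¹ • pu T p‖ := fun p => by rw [hκ p, hDsT p]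
  have hDsTsm : ContDiff ℝ (⊤ : ℕ∞) (fun p => (g p)⁻¹ • pu T p) := hginv.smul (pu_contDiff hTsm)
  have hDsTne : ∀ p, (g p)⁻¹ • pu T p ≠ 0 := fun p => by
    have := hκpos p; rw [hκp p] at this; exact norm_pos_iff.mp this
  have hκf : κ = fun p => ‖(g p)⁻¹ • pu T p‖ := funext hκp
  have hκsm : ContDiff ℝ (⊤ : ℕ∞) κ := by rw [hκf]; exact hDsTsm.norm ℝ hDsTne
  have hNp : ∀ p, N p = (κ p)⁻¹ • ((g p)⁻¹ • pu T p) := fun p => by rw [hN p, hDsT p]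
  have hNf : N = fun p => (κ p)⁻¹ • ((g p)⁻¹ • pu T p) := funext hNp
  have hNsm : ContDiff ℝ (⊤ : ℕ∞) N := by rw [hNf]; exact (hκsm.inv hκne).smul hDsTsm
  have hBf : B = fun p => cross3 (T p) (N p) := funext hB
  have hBsm : ContDiff ℝ (⊤ : ℕ∞) B := by rw [hBf]; exact contDiff_cross3 hTsm hNsm
  have hτp : ∀ p, τ p = -(⟪(g p)⁻¹ • pu B p, N p⟫ : ℝ) := fun p => by
    rw [hτ p, Ds, ← hg p]
  have hτf : τ = fun p => -(⟪(g p)⁻¹ • pu B p, N p⟫ : ℝ) := funext hτp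
  have hτsm : ContDiff ℝ (⊤ : ℕ∞) τ := by
    rw [hτf]
    exact (ContDiff.inner ℝ (hginv.smul (pu_contDiff hBsm)) hNsm).neg
  have hWsm : ContDiff ℝ (⊤ : ℕ∞) (pt X) := pt_contDiff hX
  have hW'sm : ContDiff ℝ (⊤ : ℕ∞) (pu (pt X)) := pu_contDiff hWsm
  -- basic inner product identities
  have e1 : ∀ p, (⟪pu X p, pu X p⟫ : ℝ) = g p * g p := fun p => by
    rw [real_inner_self_eq_norm_sq, ← hg p]; ring
  have e2 : ∀ p, pu X p = g p • T p := fun p => by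
    rw [hTp p, smul_smul, mul_inv_cancel₀ (hgne p), one_smul]
  have iTT : ∀ p, (⟪T p, T p⟫ : ℝ) = 1 := fun p => by
    rw [hTp p, real_inner_smul_left, real_inner_smul_right, e1 p]
    field_simp [hgne p]
  -- Frenet 1 : pu T = (g κ) • N
  have e5 : ∀ p, pu T p = (g p * κ p) • N p := fun p => by
    rw [hNp p, smul_smul, smul_smul,
      show g p * κ p * (κ p)⁻¹ * (g p)⁻¹ = 1 from by field_simp [hgne p, hκne p], one_smul]
  have idTT : ∀ p, (⟪pu T p, T p⟫ : ℝ) = 0 := fun p => by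
    have h := pu_inner_const hTsm hTsm iTT p
    have h2 : (⟪pu T p, T p⟫ : ℝ) = ⟪T p, pu T p⟫ := real_inner_comm _ _
    linarith
  have iNT : ∀ p, (⟪N p, T p⟫ : ℝ) = 0 := fun p => by
    have h := idTT p
    rw [e5 p, real_inner_smul_left] at h
    exact (mul_eq_zero.mp h).resolve_left (mul_ne_zero (hgne p) (hκne p))
  have iTN : ∀ p, (⟪T p, N p⟫ : ℝ) = 0 := fun p => by
    rw [real_inner_comm]; exact iNT p
  have iNN : ∀ p, (⟪N p, N p⟫ : ℝ) = 1 := fun p => by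
    rw [hNp p, real_inner_smul_left, real_inner_smul_right, real_inner_self_eq_norm_sq,
      ← hκp p]
    field_simp [hκne p]
  have iBT : ∀ p, (⟪B p, T p⟫ : ℝ) = 0 := fun p => by
    rw [hB p]; exact inner_cross3_left _ _
  have iBN : ∀ p, (⟪B p, N p⟫ : ℝ) = 0 := fun p => by
    rw [hB p]; exact inner_cross3_right _ _
  have iBB : ∀ p, (⟪B p, B p⟫ : ℝ) = 1 := fun p => by
    rw [hB p, inner_cross3_self, iTT p, iNN p, iTN p]; ring
  have iTB : ∀ p, (⟪T p, B p⟫ : ℝ) = 0 := fun p => by rw [real_inner_comm]; exact iBT p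
  have iNB : ∀ p, (⟪N p, B p⟫ : ℝ) = 0 := fun p => by rw [real_inner_comm]; exact iBN p
  -- derivatives of frame inner products
  have idTN : ∀ p, (⟪pu T p, N p⟫ : ℝ) = g p * κ p := fun p => by
    rw [e5 p, real_inner_smul_left, iNN p, mul_one]
  have idTB : ∀ p, (⟪pu T p, B p⟫ : ℝ) = 0 := fun p => by
    rw [e5 p, real_inner_smul_left, iNB p, mul_zero]
  have idNT : ∀ p, (⟪pu N p, T p⟫ : ℝ) = -(g p * κ p) := fun p => by
    have h := pu_inner_const hTsm hNsm iTN p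
    have h2 : (⟪T p, pu N p⟫ : ℝ) = ⟪pu N p, T p⟫ := real_inner_comm _ _
    have h3 := idTN p
    linarith
  have idNN : ∀ p, (⟪pu N p, N p⟫ : ℝ) = 0 := fun p => by
    have h := pu_inner_const hNsm hNsm iNN p
    have h2 : (⟪pu N p, N p⟫ : ℝ) = ⟪N p, pu N p⟫ := real_inner_comm _ _
    linarith
  have idBB : ∀ p, (⟪pu B p, B p⟫ : ℝ) = 0 := fun p => by
    have h := pu_inner_const hBsm hBsm iBB p
    have h2 : (⟪pu B p, B p⟫ : ℝ) = ⟪B p, pu B p⟫ := real_inner_comm _ _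
    linarith
  have idBT : ∀ p, (⟪pu B p, T p⟫ : ℝ) = 0 := fun p => by
    have h := pu_inner_const hBsm hTsm iBT p
    have h2 : (⟪B p, pu T p⟫ : ℝ) = ⟪pu T p, B p⟫ := real_inner_comm _ _
    have h3 := idTB p
    linarith
  have idBN : ∀ p, (⟪pu B p, N p⟫ : ℝ) = -(g p * τ p) := fun p => by
    have h := hτp p
    rw [real_inner_smul_left] at h
    have : (⟪pu B p, N p⟫ : ℝ) = -(g p * τ p) := by
      have hg2 := hgne p
      field_simp at h ⊢
      linarith [h]
    exact this
  have idNB : ∀ p, (⟪pu N p, B p⟫ : ℝ) = g p * τ p := fun p => by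
    have h := pu_inner_const hBsm hNsm iBN p
    have h2 : (⟪B p, pu N p⟫ : ℝ) = ⟪pu N p, B p⟫ := real_inner_comm _ _
    have h3 := idBN p
    linarith
  -- Frenet 2 and 3
  have e12N : ∀ p, pu N p = (-(g p * κ p)) • T p + (g p * τ p) • B p := fun p => by
    have h := expansion (iTT p) (iNN p) (iTN p) (pu N p)
    rw [← hB p] at h
    have hT' : (⟪T p, pu N p⟫ : ℝ) = -(g p * κ p) := by
      rw [real_inner_comm]; exact idNT p
    have hN' : (⟪N p, pu N p⟫ : ℝ) = 0 := by rw [real_inner_comm]; exact idNN p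
    have hB' : (⟪B p, pu N p⟫ : ℝ) = g p * τ p := by rw [real_inner_comm]; exact idNB p
    rw [hT', hN', hB', zero_smul, add_zero] at h
    exact h
  have e12B : ∀ p, pu B p = (-(g p * τ p)) • N p := fun p => by
    have h := expansion (iTT p) (iNN p) (iTN p) (pu B p)
    rw [← hB p] at h
    have hT' : (⟪T p, pu B p⟫ : ℝ) = 0 := by rw [real_inner_comm]; exact idBT p
    have hN' : (⟪N p, pu B p⟫ : ℝ) = -(g p * τ p) := by rw [real_inner_comm]; exact idBN p
    have hB' : (⟪B p, pu B p⟫ : ℝ) = 0 := by rw [real_inner_comm]; exact idBB p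
    rw [hT', hN', hB', zero_smul, zero_smul, add_zero, zero_add] at h
    exact h
  -- flow quantities
  have hWf : pt X = fun p => vN p • N p + vB p • B p + vT p • T p := funext hflow
  have hvNN : ContDiff ℝ (⊤ : ℕ∞) (fun q => vN q • N q) := hvN.smul hNsm
  have hvBB : ContDiff ℝ (⊤ : ℕ∞) (fun q => vB q • B q) := hvB.smul hBsm
  have hvTT : ContDiff ℝ (⊤ : ℕ∞) (fun q => vT q • T q) := hvT.smul hTsm
  have w1 : ∀ p, pu (pt X) p =
      (pu vN p • N p + vN p • pu N p) + (pu vB p • B p + vB p • pu B p)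
        + (pu vT p • T p + vT p • pu T p) := fun p => by
    rw [hWf, pu_add3 hvNN hvBB hvTT p, pu_smul hvN hNsm p, pu_smul hvB hBsm p,
      pu_smul hvT hTsm p]
  have wT : ∀ p, (⟪pu (pt X) p, T p⟫ : ℝ) = pu vT p - g p * κ p * vN p := fun p => by
    rw [w1 p, e5 p, e12N p, e12B p]
    simp only [inner_add_left, real_inner_smul_left, inner_add_right, real_inner_smul_right,
      iTT p, iNT p, iBT p]
    ring
  have wN : ∀ p, (⟪pu (pt X) p, N p⟫ : ℝ)
      = pu vN p - g p * τ p * vB p + g p * κ p * vT p := fun p => by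
    rw [w1 p, e5 p, e12N p, e12B p]
    simp only [inner_add_left, real_inner_smul_left, inner_add_right, real_inner_smul_right,
      iTN p, iNN p, iBN p]
    ring
  have wB : ∀ p, (⟪pu (pt X) p, B p⟫ : ℝ) = pu vB p + g p * τ p * vN p := fun p => by
    rw [w1 p, e5 p, e12N p, e12B p]
    simp only [inner_add_left, real_inner_smul_left, inner_add_right, real_inner_smul_right,
      iTB p, iNB p, iBB p]
    ring
  -- evolution of g
  have w2 : ∀ p, pt g p = pu vT p - g p * κ p * vN p := fun p => by
    have hfun : (fun q => g q * g q) = fun q => (⟪pu X q, pu X q⟫ : ℝ) :=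
      funext fun q => (e1 q).symm
    have hL := pt_mul hgsm hgsm p
    have hR := pt_inner (pu_contDiff hX) (pu_contDiff hX) p
    rw [← hfun] at hR
    rw [hL] at hR
    have hcl : pt (pu X) p = pu (pt X) p := pt_pu_comm hX p
    rw [hcl] at hR
    have hXN : (⟪pu (pt X) p, pu X p⟫ : ℝ) = g p * (pu vT p - g p * κ p * vN p) := by
      rw [e2 p, real_inner_smul_right, wT p]
    have hXN2 : (⟪pu X p, pu (pt X) p⟫ : ℝ) = g p * (pu vT p - g p * κ p * vN p) := by
      rw [real_inner_comm]; exact hXN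
    rw [hXN, hXN2] at hR
    have key : (2 * g p) * (pt g p - (pu vT p - g p * κ p * vN p)) = 0 := by
      linear_combination hR
    have h2g : (2 : ℝ) * g p ≠ 0 := mul_ne_zero two_ne_zero (hgne p)
    have hz := (mul_eq_zero.mp key).resolve_left h2g
    linarith
  -- additional smoothness
  have ptgsm : ContDiff ℝ (⊤ : ℕ∞) (pt g) := pt_contDiff hgsm
  have hasm : ContDiff ℝ (⊤ : ℕ∞) (fun q => -pt g q / g q ^ 2) :=
    ContDiff.div ptgsm.neg (hgsm.pow 2) (fun q => pow_ne_zero 2 (hgne q))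
  -- pointwise stage
  intro p
  -- κ•N = Ds T
  have hhN : ∀ q, (g q)⁻¹ • pu T q = κ q • N q := fun q => by
    rw [hNp q, smul_smul, mul_inv_cancel₀ (hκne q), one_smul]
  -- pt of κ*κ = ⟪DsT, DsT⟫
  have hκκ : (fun q => κ q * κ q) = fun q => (⟪(g q)⁻¹ • pu T q, (g q)⁻¹ • pu T q⟫ : ℝ) :=
    funext fun q => by rw [real_inner_self_eq_norm_sq, ← hκp q]; ring
  have hL := pt_mul hκsm hκsm p
  have hR := pt_inner hDsTsm hDsTsm p
  rw [← hκκ, hL] at hR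
  rw [hhN p] at hR
  rw [real_inner_smul_right, real_inner_smul_left] at hR
  have hRsym : (⟪N p, pt (fun q => (g q)⁻¹ • pu T q) p⟫ : ℝ)
      = (⟪pt (fun q => (g q)⁻¹ • pu T q) p, N p⟫ : ℝ) := real_inner_comm _ _
  rw [hRsym] at hR
  -- pt κ = ⟪pt (Ds T), N⟫
  have ptκval : pt κ p = (⟪pt (fun q => (g q)⁻¹ • pu T q) p, N p⟫ : ℝ) := by
    have key : (2 * κ p) * (pt κ p - (⟪pt (fun q => (g q)⁻¹ • pu T q) p, N p⟫ : ℝ)) = 0 := by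
      linear_combination hR
    have h2κ : (2 : ℝ) * κ p ≠ 0 := mul_ne_zero two_ne_zero (hκne p)
    have hz := (mul_eq_zero.mp key).resolve_left h2κ
    linarith
  -- pt of Ds T
  have pth : pt (fun q => (g q)⁻¹ • pu T q) p
      = (-pt g p / g p ^ 2) • pu T p + (g p)⁻¹ • pu (pt T) p := by
    rw [pt_smul hginv (pu_contDiff hTsm) p, pt_inv hgsm hgne p, pt_pu_comm hTsm p]
  -- formula for pt T
  have ptTf : pt T = fun q => (-pt g q / g q ^ 2) • pu X q + (g q)⁻¹ • pu (pt X) q := by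
    funext q
    rw [hTf, pt_smul hginv (pu_contDiff hX) q, pt_inv hgsm hgne q, pt_pu_comm hX q]
  -- pu of pt T
  have puptT : pu (pt T) p
      = (pu (fun q => -pt g q / g q ^ 2) p • pu X p + (-pt g p / g p ^ 2) • pu (pu X) p)
        + ((-pu g p / g p ^ 2) • pu (pt X) p + (g p)⁻¹ • pu (pu (pt X)) p) := by
    rw [ptTf]
    rw [pu_add2 (G := fun q => (-pt g q / g q ^ 2) • pu X q) (H := fun q => (g q)⁻¹ • pu (pt X) q)
      (hasm.smul (pu_contDiff hX)) (hginv.smul hW'sm) p]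
    rw [pu_smul hasm (pu_contDiff hX) p, pu_smul hginv hW'sm p]
    rw [pu_inv hgsm hgne p]
  -- second u-derivative of X
  have puXf : pu X = fun q => g q • T q := funext e2
  have puX2 : pu (pu X) p = pu g p • T p + g p • pu T p := by
    rw [puXf, pu_smul hgsm hTsm p]
  have hXppN : (⟪pu (pu X) p, N p⟫ : ℝ) = g p * (g p * κ p) := by
    rw [puX2]
    rw [inner_add_left, real_inner_smul_left, real_inner_smul_left, iTN p, idTN p]
    ring
  have hXpN : (⟪pu X p, N p⟫ : ℝ) = 0 := by
    rw [e2 p, real_inner_smul_left, iTN p, mul_zero]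
  -- second u-derivative of W = pt X against N
  have hW2 : (⟪pu (pu (pt X)) p, N p⟫ : ℝ)
      = pu (fun q => (⟪pu (pt X) q, N q⟫ : ℝ)) p - (⟪pu (pt X) p, pu N p⟫ : ℝ) := by
    have h := pu_inner hW'sm hNsm p
    linarith
  have hPfun : (fun q => (⟪pu (pt X) q, N q⟫ : ℝ))
      = fun q => pu vN q - g q * τ q * vB q + g q * κ q * vT q := funext wN
  have hgτ : pu (fun q => g q * τ q) p = pu g p * τ p + g p * pu τ p := pu_mul hgsm hτsm p
  have hgκ : pu (fun q => g q * κ q) p = pu g p * κ p + g p * pu κ p := pu_mul hgsm hκsm p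
  have hP' : pu (fun q => (⟪pu (pt X) q, N q⟫ : ℝ)) p
      = pu (pu vN) p
        - ((pu g p * τ p + g p * pu τ p) * vB p + g p * τ p * pu vB p)
        + ((pu g p * κ p + g p * pu κ p) * vT p + g p * κ p * pu vT p) := by
    rw [hPfun]
    rw [pu_subadd (pu_contDiff hvN) ((hgsm.mul hτsm).mul hvB) ((hgsm.mul hκsm).mul hvT) p]
    rw [pu_mul (hgsm.mul hτsm) hvB p, pu_mul (hgsm.mul hκsm) hvT p, hgτ, hgκ]
  have hQ : (⟪pu (pt X) p, pu N p⟫ : ℝ)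
      = -(g p * κ p) * (pu vT p - g p * κ p * vN p)
        + g p * τ p * (pu vB p + g p * τ p * vN p) := by
    rw [e12N p, inner_add_right, real_inner_smul_right, real_inner_smul_right, wT p, wB p]
  -- assemble the value of pt κ
  have hJ : (⟪pu (pt T) p, N p⟫ : ℝ)
      = (-pt g p / g p ^ 2) * (g p * (g p * κ p))
        + ((-pu g p / g p ^ 2) * (pu vN p - g p * τ p * vB p + g p * κ p * vT p)
          + (g p)⁻¹ * (⟪pu (pu (pt X)) p, N p⟫ : ℝ)) := by
    rw [puptT]
    rw [inner_add_left, inner_add_left, inner_add_left, real_inner_smul_left,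
      real_inner_smul_left, real_inner_smul_left, real_inner_smul_left,
      hXpN, hXppN, wN p]
    ring
  have hI : (⟪pt (fun q => (g q)⁻¹ • pu T q) p, N p⟫ : ℝ)
      = (-pt g p / g p ^ 2) * (g p * κ p) + (g p)⁻¹ * (⟪pu (pt T) p, N p⟫ : ℝ) := by
    rw [pth, inner_add_left, real_inner_smul_left, real_inner_smul_left, idTN p]
  -- final value of pt κ in scalar atoms
  have final : pt κ p
      = (-pt g p / g p ^ 2) * (g p * κ p)
        + (g p)⁻¹ * ((-pt g p / g p ^ 2) * (g p * (g p * κ p))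
          + ((-pu g p / g p ^ 2) * (pu vN p - g p * τ p * vB p + g p * κ p * vT p)
            + (g p)⁻¹ * (pu (pu vN) p
              - ((pu g p * τ p + g p * pu τ p) * vB p + g p * τ p * pu vB p)
              + ((pu g p * κ p + g p * pu κ p) * vT p + g p * κ p * pu vT p)
              - (-(g p * κ p) * (pu vT p - g p * κ p * vN p)
                + g p * τ p * (pu vB p + g p * τ p * vN p))))) := by
    rw [ptκval, hI, hJ, hW2, hP', hQ]
  -- compute the right-hand side pieces
  have hDsvN : Ds X vN = fun q => (g q)⁻¹ * pu vN q :=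
    funext fun q => by rw [Ds, ← hg q, smul_eq_mul]
  have goal1 : Ds X (Ds X vN) p
      = (g p)⁻¹ * ((-pu g p / g p ^ 2) * pu vN p + (g p)⁻¹ * pu (pu vN) p) := by
    rw [Ds, ← hg p, smul_eq_mul, hDsvN]
    rw [pu_mul hginv (pu_contDiff hvN) p, pu_inv hgsm hgne p]
  have goal2 : Ds X κ p = (g p)⁻¹ * pu κ p := by rw [Ds, ← hg p, smul_eq_mul]
  have goal3 : Ds X (fun q => τ q * vB q) p
      = (g p)⁻¹ * (pu τ p * vB p + τ p * pu vB p) := by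
    rw [Ds, ← hg p, smul_eq_mul, pu_mul hτsm hvB p]
  have goal4 : Ds X vB p = (g p)⁻¹ * pu vB p := by rw [Ds, ← hg p, smul_eq_mul]
  rw [goal1, goal2, goal3, goal4, final, w2 p]
  have hg0 := hgne p
  field_simp
  ring
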